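/- Let K be a complete discrete valuation field of characteristic p>0 with perfect residue field k. Set F_nK=m_K^{−n}, let F_nH^1(K) be the image of F_nK under the projection K→K/P(K)≅H^1(K) where P(x)=x^p−x, and let ν:Gr_nK→Gr_nH^1(K) be the induced map on graded quotients. Then: if n>0 and p∤n, ν is an isomorphism; if n=0, ν is surjective and Gr_0H^1(K) is isomorphic to H^1(k)=k/P(k); in all other cases (n<0, or n>0 with p∣n), ν is the zero map. -/

import Mathlib

/-!
If `v y < 0` then `v (y ^ p - y) = p * v y`, while `y ^ p - y` is integral when `y` is. Hence
an Artin–Schreier value `y ^ p - y` of negative valuation has valuation divisible by `p`: this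
gives injectivity on `Gr_n` for `p ∤ n`, and integrality of `y` in degree `0`.

Conversely, for `n < 0` one has `x - ((-x) ^ p + x) = -(-x) ^ p ∈ F_{pn}K ⊆ F_{n-1}K`. For
`n = p m` write `x = u t⁻ⁿ` with `u` integral and pick `w` with `u ≡ w ^ p mod 𝔪_K` (perfect
residue field); then `y = w t⁻ᵐ` removes the leading term of `x`, up to `w t⁻ᵐ ∈ F_mK ⊆ F_{n-1}K`.
-/

/-- A normalized (additive) discrete valuation on a field `K`; the value `v 0` is junk.
Together with `IsComplete` and `ResiduePerfect` below, this models a complete discrete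
valuation field with perfect residue field. -/
structure DVal (K : Type*) [Field K] where
  v : K → ℤ
  v_mul : ∀ {x y : K}, x ≠ 0 → y ≠ 0 → v (x * y) = v x + v y
  v_add : ∀ {x y : K}, x ≠ 0 → y ≠ 0 → x + y ≠ 0 → min (v x) (v y) ≤ v (x + y)
  exists_uniformizer : ∃ t : K, t ≠ 0 ∧ v t = 1

namespace DVal

variable {K : Type*} [Field K] (V : DVal K)

/-- `x` lies in the valuation ring `𝒪_K`. -/
def integer (x : K) : Prop := x = 0 ∨ 0 ≤ V.v x

/-- `x` lies in the maximal ideal `𝔪_K`. -/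
def maxIdeal (x : K) : Prop := x = 0 ∨ 1 ≤ V.v x

/-- `t` is a uniformizer. -/
def IsUniformizer (t : K) : Prop := t ≠ 0 ∧ V.v t = 1

/-- `x ∈ F_nK = 𝔪_K^{-n}`, i.e. `v(x) ≥ -n` (or `x = 0`). -/
def Fil (n : ℤ) (x : K) : Prop := x = 0 ∨ -n ≤ V.v x

/-- `f` is a Cauchy sequence for `V`. -/
def IsCauchy (f : ℕ → K) : Prop :=
  ∀ N : ℤ, ∃ M : ℕ, ∀ m k : ℕ, M ≤ m → M ≤ k → f m = f k ∨ N ≤ V.v (f m - f k)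

/-- `f` converges to `x` for `V`. -/
def Tendsto (f : ℕ → K) (x : K) : Prop :=
  ∀ N : ℤ, ∃ M : ℕ, ∀ m : ℕ, M ≤ m → f m = x ∨ N ≤ V.v (f m - x)

/-- `K` is complete for `V`. -/
def IsComplete : Prop := ∀ f : ℕ → K, V.IsCauchy f → ∃ x : K, V.Tendsto f x

/-- The residue field `k = 𝒪_K/𝔪_K` is perfect (in characteristic `p`): the Frobenius
is surjective on the residue field. -/
def ResiduePerfect (p : ℕ) : Prop :=
  ∀ x : K, V.integer x → ∃ y : K, V.integer y ∧ V.maxIdeal (x - y ^ p)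

end DVal
namespace DVal

variable {K : Type*} [Field K] (V : DVal K)

lemma v_one : V.v 1 = 0 := by
  have h := V.v_mul (one_ne_zero (α := K)) one_ne_zero
  rw [one_mul] at h
  omega

lemma v_neg {x : K} (hx : x ≠ 0) : V.v (-x) = V.v x := by
  have hm1 : (-1 : K) ≠ 0 := neg_ne_zero.mpr one_ne_zero
  have h1 : V.v (-1 : K) = 0 := by
    have h := V.v_mul hm1 hm1
    rw [neg_mul_neg, one_mul, v_one] at h
    omega
  have h := V.v_mul hm1 hx
  rw [neg_one_mul] at h
  omega

lemma v_inv {x : K} (hx : x ≠ 0) : V.v x⁻¹ = -V.v x := by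
  have h := V.v_mul hx (inv_ne_zero hx)
  rw [mul_inv_cancel₀ hx, v_one] at h
  omega

lemma v_pow {x : K} (hx : x ≠ 0) (n : ℕ) : V.v (x ^ n) = n * V.v x := by
  induction n with
  | zero => simp [v_one]
  | succ n ih =>
    rw [pow_succ, V.v_mul (pow_ne_zero n hx) hx, ih]
    push_cast
    ring

lemma v_zpow {x : K} (hx : x ≠ 0) (n : ℤ) : V.v (x ^ n) = n * V.v x := by
  cases n with
  | ofNat n => simpa using V.v_pow hx n
  | negSucc n =>
    rw [zpow_negSucc, V.v_inv (pow_ne_zero _ hx), V.v_pow hx, Int.negSucc_eq]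
    push_cast
    ring

lemma fil_iff {n : ℤ} {x : K} (hx : x ≠ 0) : V.Fil n x ↔ -n ≤ V.v x :=
  or_iff_right hx

lemma not_fil_iff {n : ℤ} {x : K} : ¬V.Fil n x ↔ x ≠ 0 ∧ V.v x < -n := by
  simp only [Fil, not_or, not_le]

lemma integer_iff_fil_zero {x : K} : V.integer x ↔ V.Fil 0 x := by
  simp only [integer, Fil, neg_zero]

lemma maxIdeal_iff_fil_neg_one {x : K} : V.maxIdeal x ↔ V.Fil (-1) x := by
  simp only [maxIdeal, Fil, neg_neg]

lemma fil_zero (n : ℤ) : V.Fil n 0 := Or.inl rfl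

lemma fil_one : V.Fil 0 (1 : K) := (V.fil_iff one_ne_zero).mpr (by simp [v_one])

lemma fil_mono {m n : ℤ} (h : m ≤ n) {x : K} (hx : V.Fil m x) : V.Fil n x :=
  hx.imp_right fun hv => by omega

lemma fil_neg {n : ℤ} {x : K} (hx : V.Fil n x) : V.Fil n (-x) := by
  rcases eq_or_ne x 0 with rfl | hx0
  · simpa using V.fil_zero n
  · rw [V.fil_iff (neg_ne_zero.mpr hx0), V.v_neg hx0]
    exact (V.fil_iff hx0).mp hx

lemma fil_add {n : ℤ} {x y : K} (hx : V.Fil n x) (hy : V.Fil n y) : V.Fil n (x + y) := by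
  rcases eq_or_ne x 0 with rfl | hx0
  · simpa using hy
  rcases eq_or_ne y 0 with rfl | hy0
  · simpa using hx
  rcases eq_or_ne (x + y) 0 with hs | hs
  · exact Or.inl hs
  have h := V.v_add hx0 hy0 hs
  rw [V.fil_iff hx0] at hx
  rw [V.fil_iff hy0] at hy
  exact Or.inr (by omega)

lemma fil_sub {n : ℤ} {x y : K} (hx : V.Fil n x) (hy : V.Fil n y) : V.Fil n (x - y) := by
  simpa [sub_eq_add_neg] using V.fil_add hx (V.fil_neg hy)

lemma fil_mul {a b : ℤ} {x y : K} (hx : V.Fil a x) (hy : V.Fil b y) :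
    V.Fil (a + b) (x * y) := by
  rcases eq_or_ne x 0 with rfl | hx0
  · simpa using V.fil_zero (a + b)
  rcases eq_or_ne y 0 with rfl | hy0
  · simpa using V.fil_zero (a + b)
  rw [V.fil_iff (mul_ne_zero hx0 hy0), V.v_mul hx0 hy0]
  rw [V.fil_iff hx0] at hx
  rw [V.fil_iff hy0] at hy
  omega

lemma fil_pow {a : ℤ} {x : K} (hx : V.Fil a x) (p : ℕ) : V.Fil (p * a) (x ^ p) := by
  induction p with
  | zero => simpa using V.fil_one
  | succ p ih => simpa [pow_succ, add_mul] using V.fil_mul ih hx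

lemma fil_zpow_of_isUniformizer {t : K} (ht : V.IsUniformizer t) (k : ℤ) : V.Fil (-k) (t ^ k) :=
  (V.fil_iff (zpow_ne_zero k ht.1)).mpr (by rw [V.v_zpow ht.1, ht.2]; simp)

lemma v_add_eq_left_of_fil {x y : K} (hx : x ≠ 0) (hy : V.Fil (-V.v x - 1) y) :
    x + y ≠ 0 ∧ V.v (x + y) = V.v x := by
  rcases eq_or_ne y 0 with rfl | hy0
  · simpa using hx
  have hlt : V.v x < V.v y := by
    have := (V.fil_iff hy0).mp hy
    omega
  have hxy : x + y ≠ 0 := by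
    intro h
    rw [eq_neg_of_add_eq_zero_left h, V.v_neg hy0] at hlt
    exact lt_irrefl _ hlt
  have hle := V.v_add hx hy0 hxy
  have hge := V.v_add hxy (neg_ne_zero.mpr hy0) (by simpa using hx)
  rw [V.v_neg hy0, add_neg_cancel_right] at hge
  exact ⟨hxy, by omega⟩

lemma v_eq_of_fil_sub {x z : K} (hx : x ≠ 0) (h : V.Fil (-V.v x - 1) (x - z)) :
    z ≠ 0 ∧ V.v z = V.v x := by
  simpa using V.v_add_eq_left_of_fil hx (V.fil_neg h)

variable {p : ℕ}

lemma v_pow_sub_self_of_neg (hp : 1 < p) {y : K} (hy : y ≠ 0) (hv : V.v y < 0) :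
    y ^ p - y ≠ 0 ∧ V.v (y ^ p - y) = p * V.v y := by
  have hp2 : (2 : ℤ) ≤ p := by exact_mod_cast hp
  have hy' : V.Fil (-V.v (y ^ p) - 1) (-y) := by
    refine V.fil_neg ((V.fil_iff hy).mpr ?_)
    rw [V.v_pow hy]
    nlinarith
  simpa [← sub_eq_add_neg, V.v_pow hy] using V.v_add_eq_left_of_fil (pow_ne_zero p hy) hy'

lemma fil_zero_pow_sub_self_iff (hp : 1 < p) {y : K} :
    V.Fil 0 (y ^ p - y) ↔ V.Fil 0 y := by
  refine ⟨fun h => ?_, fun h => by simpa using V.fil_sub (V.fil_pow h p) h⟩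
  by_contra hy
  obtain ⟨hy0, hv⟩ := V.not_fil_iff.mp hy
  obtain ⟨hP0, hvP⟩ := V.v_pow_sub_self_of_neg hp hy0 (by simpa using hv)
  rw [V.fil_iff hP0, hvP] at h
  have : (0 : ℤ) < p := by omega
  nlinarith

theorem fil_pred_of_fil_sub_pow_sub_self (hp : 1 < p) {n : ℤ} (hn : 0 < n)
    (hpn : ¬(p : ℤ) ∣ n) {x y : K} (hx : V.Fil n x) (hy : V.Fil (n - 1) (x - (y ^ p - y))) :
    V.Fil (n - 1) x := by
  by_contra hx'
  obtain ⟨hx0, hvx'⟩ := V.not_fil_iff.mp hx'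
  have hvx : V.v x = -n := by
    have := (V.fil_iff hx0).mp hx
    omega
  obtain ⟨hP0, hvP⟩ := V.v_eq_of_fil_sub hx0 (by rwa [hvx, neg_neg])
  have hy' : ¬V.Fil 0 y := fun h => by
    have := (V.fil_iff hP0).mp ((V.fil_zero_pow_sub_self_iff hp).mpr h)
    omega
  obtain ⟨hy0, hvy⟩ := V.not_fil_iff.mp hy'
  rw [(V.v_pow_sub_self_of_neg hp hy0 (by simpa using hvy)).2, hvx] at hvP
  exact hpn ⟨-V.v y, by linarith⟩

theorem integer_of_fil_sub_pow_sub_self (hp : 1 < p) {x y : K} (hx : V.integer x)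
    (hy : V.Fil (-1) (x - (y ^ p - y))) : V.integer y := by
  rw [integer_iff_fil_zero] at hx ⊢
  rw [← V.fil_zero_pow_sub_self_iff hp]
  simpa using V.fil_sub hx (V.fil_mono (by norm_num) hy)

theorem exists_fil_pred_sub_pow_sub_self_of_neg (hp : 1 < p) {n : ℤ} (hn : n < 0) {x : K}
    (hx : V.Fil n x) : ∃ y, V.Fil (n - 1) (x - (y ^ p - y)) := by
  have hp2 : (2 : ℤ) ≤ p := by exact_mod_cast hp
  refine ⟨-x, ?_⟩
  have he : x - ((-x) ^ p - -x) = -(-x) ^ p := by ring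
  rw [he]
  exact V.fil_neg (V.fil_mono (by nlinarith) (V.fil_pow (V.fil_neg hx) p))

theorem exists_fil_pred_sub_pow_sub_self_of_dvd (hp : 1 < p) (hperf : V.ResiduePerfect p)
    {m : ℤ} (hm : 0 < m) {x : K} (hx : V.Fil (p * m) x) :
    ∃ y, V.Fil (p * m - 1) (x - (y ^ p - y)) := by
  obtain ⟨t, ht⟩ := V.exists_uniformizer
  set n : ℤ := p * m with hn_def
  obtain ⟨w, hw, hxw⟩ := hperf (x * t ^ n)
    (V.integer_iff_fil_zero.mpr (by simpa using V.fil_mul hx (V.fil_zpow_of_isUniformizer ht n)))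
  rw [integer_iff_fil_zero] at hw
  rw [maxIdeal_iff_fil_neg_one] at hxw
  refine ⟨w * t ^ (-m), ?_⟩
  have htp : (t ^ (-m)) ^ p = t ^ (-n) := by
    rw [← zpow_natCast, ← zpow_mul, hn_def]
    ring_nf
  have he : x - ((w * t ^ (-m)) ^ p - w * t ^ (-m)) =
      (x * t ^ n - w ^ p) * t ^ (-n) + w * t ^ (-m) := by
    rw [mul_pow, htp, zpow_neg]
    field_simp [zpow_ne_zero n ht.1]
    ring
  have hp2 : (2 : ℤ) ≤ p := by exact_mod_cast hp
  rw [he]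
  refine V.fil_add ?_
    (V.fil_mono (by nlinarith) (V.fil_mul hw (V.fil_zpow_of_isUniformizer ht (-m))))
  convert V.fil_mul hxw (V.fil_zpow_of_isUniformizer ht (-n)) using 1
  ring

end DVal

theorem stmt12_general (p : ℕ) (hp : p.Prime)
    (K : Type*) [Field K]
    (VK : DVal K) (hperf : VK.ResiduePerfect p) :
    -- `n > 0`, `p ∤ n`: isomorphism
    (∀ n : ℤ, 0 < n → ¬(p : ℤ) ∣ n → ∀ x : K, VK.Fil n x →
      ((∃ y : K, VK.Fil (n - 1) (x - (y ^ p - y))) ↔ VK.Fil (n - 1) x)) ∧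
    -- `n = 0`: `Gr_0H¹(K) ≅ k/P(k)`
    (∀ x : K, VK.integer x →
      ((∃ y : K, VK.Fil (-1) (x - (y ^ p - y))) ↔
        ∃ z : K, VK.integer z ∧ VK.maxIdeal (x - (z ^ p - z)))) ∧
    -- `n < 0`, or `n > 0` with `p ∣ n`: zero map
    (∀ n : ℤ, (n < 0 ∨ (0 < n ∧ (p : ℤ) ∣ n)) → ∀ x : K, VK.Fil n x →
      ∃ y : K, VK.Fil (n - 1) (x - (y ^ p - y))) := by
  have hp1 := hp.one_lt
  refine ⟨fun n hn hpn x hx => ⟨?_, ?_⟩, fun x hx => ⟨?_, ?_⟩, ?_⟩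
  · rintro ⟨y, hy⟩
    exact VK.fil_pred_of_fil_sub_pow_sub_self hp1 hn hpn hx hy
  · exact fun h => ⟨0, by simpa [zero_pow hp.ne_zero] using h⟩
  · rintro ⟨y, hy⟩
    exact ⟨y, VK.integer_of_fil_sub_pow_sub_self hp1 hx hy, VK.maxIdeal_iff_fil_neg_one.mpr hy⟩
  · rintro ⟨z, -, hz⟩
    exact ⟨z, VK.maxIdeal_iff_fil_neg_one.mp hz⟩
  · rintro n (hn | ⟨hn, m, rfl⟩) x hx
    · exact VK.exists_fil_pred_sub_pow_sub_self_of_neg hp1 hn hx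
    · exact VK.exists_fil_pred_sub_pow_sub_self_of_dvd hp1 hperf
        (pos_of_mul_pos_right hn (by positivity)) hx

/-- **Lemma `le`**: let `K` be a complete discrete valuation field of characteristic
`p > 0` with perfect residue field `k`, and let `ν : Gr_nK → Gr_nH¹(K)` be the map
induced by the projection `K → K/P(K) = H¹(K)` (where `P(x) = x^p − x` and `F_nH¹(K)`
is the image of `F_nK`).  Then:
* if `n > 0` and `p ∤ n`, `ν` is an isomorphism (here: injective; surjectivity holds by
  definition of `F_nH¹(K)`) — i.e. if the class of `x ∈ F_nK` lies in `F_{n-1}H¹(K)`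
  then `x ∈ F_{n-1}K`;
* if `n = 0`, `ν` is surjective and `Gr_0H¹(K) ≅ H¹(k) = k/P(k)` — i.e. for `x ∈ 𝒪_K`,
  the class of `x` lies in `F_{-1}H¹(K)` iff the residue of `x` lies in `P(k)`;
* otherwise (`n < 0`, or `n > 0` with `p ∣ n`), `ν` is the zero map — i.e. every
  `x ∈ F_nK` has its class in `F_{n-1}H¹(K)`. -/
theorem stmt12 (p : ℕ) (hp : p.Prime)
    (K : Type*) [Field K] [CharP K p]
    (VK : DVal K) (hcomp : VK.IsComplete) (hperf : VK.ResiduePerfect p) :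
    -- `n > 0`, `p ∤ n`: isomorphism
    (∀ n : ℤ, 0 < n → ¬(p : ℤ) ∣ n → ∀ x : K, VK.Fil n x →
      ((∃ y : K, VK.Fil (n - 1) (x - (y ^ p - y))) ↔ VK.Fil (n - 1) x)) ∧
    -- `n = 0`: `Gr_0H¹(K) ≅ k/P(k)`
    (∀ x : K, VK.integer x →
      ((∃ y : K, VK.Fil (-1) (x - (y ^ p - y))) ↔
        ∃ z : K, VK.integer z ∧ VK.maxIdeal (x - (z ^ p - z)))) ∧
    -- `n < 0`, or `n > 0` with `p ∣ n`: zero map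
    (∀ n : ℤ, (n < 0 ∨ (0 < n ∧ (p : ℤ) ∣ n)) → ∀ x : K, VK.Fil n x →
      ∃ y : K, VK.Fil (n - 1) (x - (y ^ p - y))) :=
  stmt12_general p hp K VK hperf
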